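/- arXiv:0906.4816 — 6 statements merged into one kernel-verified Lean document; each statement's English description precedes it below -/
import Mathlib

section
/- Let v_1,…,v_k ∈ ℝ^k and let R be the minimal radius of a closed Euclidean ball containing {v_1,…,v_k}, with center w (the Chebyshev center). Then w lies in the convex hull of those v_i satisfying ‖v_i − w‖ = R. Equivalently, there exist nonnegative coefficients p(1),…,p(k) with Σ p(i) = 1, w = Σ p(i) v_i, and p(i) ≠ 0 only if ‖v_i − w‖ = R. -/
/-!
If the center `w` of a minimal enclosing ball of radius `R` were not in the convex hull of the
points on the sphere, a hyperplane would separate it from them: some `u` satisfies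
`0 < ⟪u, v i - w⟫` for every `v i` on the sphere. Moving the center a short way along `u` brings
the points on the sphere strictly inside the ball, and by continuity keeps the others inside, so
a smaller ball would enclose all points.
-/

open Filter Topology
open scoped RealInnerProductSpace

variable {E : Type*} [NormedAddCommGroup E] [InnerProductSpace ℝ E]

theorem norm_sub_smul_lt_norm {x u : E} {t : ℝ} (ht : 0 < t) (htu : t * ‖u‖ ^ 2 < 2 * ⟪u, x⟫) :
    ‖x - t • u‖ < ‖x‖ := by
  have hexp : ‖x - t • u‖ ^ 2 = ‖x‖ ^ 2 - t * (2 * ⟪u, x⟫ - t * ‖u‖ ^ 2) := by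
    rw [norm_sub_sq_real, real_inner_smul_right, real_inner_comm, norm_smul, mul_pow,
      Real.norm_eq_abs, sq_abs]
    ring
  refine lt_of_pow_lt_pow_left₀ 2 (norm_nonneg x) ?_
  rw [hexp]
  nlinarith [mul_pos ht (sub_pos.2 htu)]

theorem eventually_norm_sub_smul_lt {x u : E} {R : ℝ} (hx : ‖x‖ ≤ R)
    (hu : ‖x‖ = R → 0 < ⟪u, x⟫) : ∀ᶠ t in 𝓝[>] (0 : ℝ), ‖x - t • u‖ < R := by
  rcases hx.lt_or_eq with hlt | rfl
  · have hcont : ContinuousAt (fun t : ℝ => ‖x - t • u‖) 0 := by fun_prop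
    exact nhdsWithin_le_nhds (hcont.eventually_lt_const (by simpa using hlt))
  · have hsmall : ∀ᶠ t in 𝓝 (0 : ℝ), t * ‖u‖ ^ 2 < 2 * ⟪u, x⟫ :=
      (continuous_id.mul continuous_const).continuousAt.eventually_lt_const
        (by simpa using hu rfl)
    filter_upwards [nhdsWithin_le_nhds hsmall, self_mem_nhdsWithin] with t htu ht
    exact norm_sub_smul_lt_norm ht htu

theorem exists_lt_forall_norm_sub_le {ι : Type*} [Finite ι] {v : ι → E} {w u : E} {R : ℝ}
    (hR : ∀ i, ‖v i - w‖ ≤ R) (hu : ∀ i, ‖v i - w‖ = R → 0 < ⟪u, v i - w⟫) :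
    ∃ w' R', R' < R ∧ ∀ i, ‖v i - w'‖ ≤ R' := by
  obtain ⟨t, ht⟩ : ∃ t : ℝ, ∀ i, ‖v i - (w + t • u)‖ < R := by
    simp_rw [sub_add_eq_sub_sub]
    exact (eventually_all.2 fun i => eventually_norm_sub_smul_lt (hR i) (hu i)).exists
  have hR' : ∀ᶠ R' in 𝓝[<] R, ∀ i, ‖v i - (w + t • u)‖ < R' :=
    nhdsWithin_le_nhds (eventually_all.2 fun i => eventually_gt_nhds (ht i))
  obtain ⟨R', hle, hlt⟩ := (hR'.and self_mem_nhdsWithin).exists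
  exact ⟨w + t • u, R', hlt, fun i => (hle i).le⟩

theorem exists_inner_sub_pos_of_notMem [CompleteSpace E] {t : Set E} {x : E}
    (hconv : Convex ℝ t) (hclosed : IsClosed t) (hx : x ∉ t) :
    ∃ u : E, ∀ y ∈ t, 0 < ⟪u, y - x⟫ := by
  obtain ⟨f, s, hfx, hft⟩ := geometric_hahn_banach_point_closed hconv hclosed hx
  refine ⟨(InnerProductSpace.toDual ℝ E).symm f, fun y hy => ?_⟩
  rw [inner_sub_right, InnerProductSpace.toDual_symm_apply, InnerProductSpace.toDual_symm_apply]
  linarith [hft y hy]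

theorem exists_weights_of_mem_convexHull_image {ι : Type*} [Fintype ι] {v : ι → E} {s : Set ι}
    {x : E} (hx : x ∈ convexHull ℝ (v '' s)) :
    ∃ p : ι → ℝ, (∀ i, 0 ≤ p i) ∧ ∑ i, p i = 1 ∧ ∑ i, p i • v i = x ∧
      ∀ i, p i ≠ 0 → i ∈ s := by
  classical
  refine convexHull_min (t := {x | ∃ p : ι → ℝ, (∀ i, 0 ≤ p i) ∧ ∑ i, p i = 1 ∧
    ∑ i, p i • v i = x ∧ ∀ i, p i ≠ 0 → i ∈ s}) ?_ ?_ hx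
  · rintro _ ⟨i, hi, rfl⟩
    refine ⟨Pi.single i 1, fun j => ?_, by simp, by simp, fun j hj => ?_⟩
    · by_cases h : j = i <;> simp [h]
    · by_cases h : j = i <;> simp_all
  · rintro _ ⟨p, hp0, hp1, rfl, hps⟩ _ ⟨q, hq0, hq1, rfl, hqs⟩ a b ha hb hab
    refine ⟨a • p + b • q, fun i => ?_, ?_, ?_, fun i hi => ?_⟩
    · simp only [Pi.add_apply, Pi.smul_apply, smul_eq_mul]
      exact add_nonneg (mul_nonneg ha (hp0 i)) (mul_nonneg hb (hq0 i))
    · simp [Finset.sum_add_distrib, ← Finset.mul_sum, hp1, hq1, hab]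
    · simp [add_smul, mul_smul, Finset.sum_add_distrib, Finset.smul_sum]
    · by_contra his
      simp [not_imp_comm.1 (hps i) his, not_imp_comm.1 (hqs i) his] at hi

theorem center_mem_convexHull_boundary [CompleteSpace E] {ι : Type*} [Finite ι] {v : ι → E}
    {w : E} {R : ℝ} (hR : ∀ i, ‖v i - w‖ ≤ R)
    (hmin : ∀ w' R', (∀ i, ‖v i - w'‖ ≤ R') → R ≤ R') :
    w ∈ convexHull ℝ (v '' {i | ‖v i - w‖ = R}) := by
  by_contra hw
  obtain ⟨u, hu⟩ := exists_inner_sub_pos_of_notMem (convex_convexHull ℝ _)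
    ((Set.toFinite _).isClosed_convexHull (𝕜 := ℝ)) hw
  obtain ⟨w', R', hlt, hle⟩ :=
    exists_lt_forall_norm_sub_le hR fun i hi => hu _ (subset_convexHull ℝ _ ⟨i, hi, rfl⟩)
  exact hlt.not_ge (hmin w' R' hle)

/-- The center of the minimal enclosing Euclidean ball of `v_1,…,v_k` is a convex combination
of those `v_i` lying on the boundary sphere of that ball. -/
theorem chebyshev_center_in_hull_of_boundary (k : ℕ)
    (v : Fin k → EuclideanSpace ℝ (Fin k)) (w : EuclideanSpace ℝ (Fin k)) (R : ℝ)
    (hR : ∀ i, ‖v i - w‖ ≤ R)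
    (hmin : ∀ (w' : EuclideanSpace ℝ (Fin k)) (R' : ℝ), (∀ i, ‖v i - w'‖ ≤ R') → R ≤ R') :
    ∃ p : Fin k → ℝ, (∀ i, 0 ≤ p i) ∧ (∑ i, p i = 1) ∧ (w = ∑ i, p i • v i) ∧
      ∀ i, p i ≠ 0 → ‖v i - w‖ = R := by
  obtain ⟨p, hp0, hp1, hpw, hpR⟩ :=
    exists_weights_of_mem_convexHull_image (center_mem_convexHull_boundary hR hmin)
  exact ⟨p, hp0, hp1, hpw.symm, hpR⟩
end

section
/- Let v_1,…,v_k ∈ ℝ^k with Gram matrix B, let R(B) and w(B) be the radius and center of the minimal enclosing ball of {v_1,…,v_k}, and let p be a probability distribution on {1,…,k} with w(B) = Σ p(i) v_i and p(i) ≠ 0 only when ‖v_i − w(B)‖ = R(B). For β ∈ (0, 1/7), define μ(i) = (1−β) p(i) + β/k. Then Σ_{i=1}^k μ(i) ‖v_i − Σ_{j=1}^k μ(j) v_j‖² ≥ (1 − 7β) R(B)². -/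
/-!
Mixing in the uniform distribution moves the centre of mass from `w` to the point
`c = (1 - β) w + β a`, where the average `a` of the `v i` lies in the ball of radius `R`
around `w`; hence `‖c - w‖ ≤ β R`. Every point charged by `p` lies at distance `R` from `w`,
so at distance at least `(1 - β) R` from `c`, and it keeps mass at least `(1 - β) p i` under
`μ`. This gives the lower bound `(1 - β)³ R²`, and `(1 - β)³ ≥ 1 - 3β` by Bernoulli's inequality.
-/

open Finset

section

variable {ι E : Type*} [Fintype ι] [NormedAddCommGroup E]

lemma sq_le_sum_mul_sq_norm_sub {q : ι → ℝ} (hq0 : ∀ i, 0 ≤ q i) (hq1 : ∑ i, q i = 1)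
    {v : ι → E} {c : E} {r : ℝ} (hr : 0 ≤ r) (hv : ∀ i, q i ≠ 0 → r ≤ ‖v i - c‖) :
    r ^ 2 ≤ ∑ i, q i * ‖v i - c‖ ^ 2 := by
  calc r ^ 2 = ∑ i, q i * r ^ 2 := by rw [← sum_mul, hq1, one_mul]
    _ ≤ ∑ i, q i * ‖v i - c‖ ^ 2 := sum_le_sum fun i _ => by
      rcases eq_or_ne (q i) 0 with hqi | hqi
      · simp [hqi]
      · exact mul_le_mul_of_nonneg_left (pow_le_pow_left₀ hr (hv i hqi) 2) (hq0 i)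

variable [NormedSpace ℝ E]

lemma sum_mixture_smul_eq_lineMap (p q : ι → ℝ) (v : ι → E) (t : ℝ) :
    ∑ i, ((1 - t) * p i + t * q i) • v i =
      AffineMap.lineMap (∑ i, p i • v i) (∑ i, q i • v i) t := by
  simp only [AffineMap.lineMap_apply_module, smul_sum, add_smul, mul_smul, sum_add_distrib]

lemma one_sub_mul_le_dist_lineMap {w a x : E} {R β : ℝ} (hβ : 0 ≤ β) (ha : dist a w ≤ R)
    (hx : dist x w = R) : (1 - β) * R ≤ dist x (AffineMap.lineMap w a β) := by
  have htri := dist_triangle x (AffineMap.lineMap w a β) w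
  rw [dist_lineMap_left, Real.norm_of_nonneg hβ, dist_comm w a] at htri
  nlinarith [mul_le_mul_of_nonneg_left ha hβ]

end

theorem perturbed_distribution_variance_bound_general (k : ℕ)
    (v : Fin k → EuclideanSpace ℝ (Fin k)) (w : EuclideanSpace ℝ (Fin k)) (R : ℝ)
    (hR : ∀ i, ‖v i - w‖ ≤ R)
    (p : Fin k → ℝ) (hp0 : ∀ i, 0 ≤ p i) (hp1 : ∑ i, p i = 1)
    (hw : w = ∑ i, p i • v i) (hbd : ∀ i, p i ≠ 0 → ‖v i - w‖ = R)
    (β : ℝ) (hβ : β ∈ Set.Ioo (0 : ℝ) (1 / 7))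
    (μ : Fin k → ℝ) (hμ : ∀ i, μ i = (1 - β) * p i + β / k) :
    ∑ i, μ i * ‖v i - ∑ j, μ j • v j‖ ^ 2 ≥ (1 - 7 * β) * R ^ 2 := by
  obtain ⟨hβ0, hβ7⟩ := hβ
  have hk : (0 : ℝ) < k := by
    rcases k.eq_zero_or_pos with rfl | hk
    · simp at hp1
    · exact_mod_cast hk
  set a := ∑ j, (k : ℝ)⁻¹ • v j
  have ha : dist a w ≤ R := Metric.mem_closedBall.1 <|
    (convex_closedBall w R).sum_mem (fun _ _ => by positivity) (by simp [hk.ne'])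
      fun j _ => by simpa [dist_eq_norm] using hR j
  have hc : ∑ j, μ j • v j = AffineMap.lineMap w a β := by
    simp only [hw, a, ← sum_mixture_smul_eq_lineMap, hμ, div_eq_mul_inv]
  have hR0 : 0 ≤ R := dist_nonneg.trans ha
  calc (1 - 7 * β) * R ^ 2 ≤ (1 - β) ^ 3 * R ^ 2 := by
        gcongr
        have bernoulli := one_add_mul_le_pow (a := -β) (by linarith) 3
        rw [← sub_eq_add_neg] at bernoulli
        push_cast at bernoulli
        linarith
    _ = (1 - β) * ((1 - β) * R) ^ 2 := by ring
    _ ≤ (1 - β) * ∑ i, p i * ‖v i - ∑ j, μ j • v j‖ ^ 2 := by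
        gcongr
        · linarith
        refine sq_le_sum_mul_sq_norm_sub hp0 hp1 (by nlinarith) fun i hi => ?_
        rw [← dist_eq_norm, hc]
        exact one_sub_mul_le_dist_lineMap hβ0.le ha (by rw [dist_eq_norm, hbd i hi])
    _ ≤ ∑ i, μ i * ‖v i - ∑ j, μ j • v j‖ ^ 2 := by
        rw [mul_sum]
        refine sum_le_sum fun i _ => ?_
        rw [← mul_assoc, hμ]
        gcongr
        exact le_add_of_nonneg_right (by positivity)

/-- For the perturbed distribution `μ(i) = (1−β)p(i) + β/k` with `β ∈ (0, 1/7)`, the weighted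
variance-type quantity is at least `(1 − 7β) R(B)²`. -/
theorem perturbed_distribution_variance_bound (k : ℕ)
    (v : Fin k → EuclideanSpace ℝ (Fin k)) (w : EuclideanSpace ℝ (Fin k)) (R : ℝ)
    (hR : ∀ i, ‖v i - w‖ ≤ R)
    (hmin : ∀ (w' : EuclideanSpace ℝ (Fin k)) (R' : ℝ), (∀ i, ‖v i - w'‖ ≤ R') → R ≤ R')
    (p : Fin k → ℝ) (hp0 : ∀ i, 0 ≤ p i) (hp1 : ∑ i, p i = 1)
    (hw : w = ∑ i, p i • v i) (hbd : ∀ i, p i ≠ 0 → ‖v i - w‖ = R)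
    (β : ℝ) (hβ : β ∈ Set.Ioo (0 : ℝ) (1 / 7))
    (μ : Fin k → ℝ) (hμ : ∀ i, μ i = (1 - β) * p i + β / k) :
    ∑ i, μ i * ‖v i - ∑ j, μ j • v j‖ ^ 2 ≥ (1 - 7 * β) * R ^ 2 :=
  perturbed_distribution_variance_bound_general k v w R hR p hp0 hp1 hw hbd β hβ μ hμ
end

section
/- Let γ_2 be the standard Gaussian measure on ℝ². If A ⊆ ℝ² is a cone of angle α ∈ [0, 2π] with vertex at the origin (the set of points whose polar angle lies in an interval of length α), then ‖∫_A x dγ_2(x)‖² = sin²(α/2)/(2π). -/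
/-!
In polar coordinates `x = r • (cos φ, sin φ)` the integrand of the moment factors, and
`∫_A x dγ₂ = (2π)⁻¹ (∫₀^∞ r² e^{-r²/2} dr) • ∫_θ^{θ+α} (cos φ, sin φ) dφ`.
The radial integral is a Gamma integral equal to `√(π/2)`; the angular one is
`(sin (θ+α) - sin θ, cos θ - cos (θ+α))`, of squared length `2 - 2 cos α = 4 sin² (α/2)`.
The polar chart takes angles in `(-π, π)`, where the cone is cut out by the angles congruent
mod `2π` to a point of `[θ, θ + α]`; periodicity moves this window to `(θ, θ + 2π)`.
-/

open MeasureTheory RealInnerProductSpace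

/-- The standard Gaussian probability measure on `ℝ^n`. -/
noncomputable def stdGaussian (n : ℕ) : Measure (EuclideanSpace ℝ (Fin n)) :=
  volume.withDensity fun x => ENNReal.ofReal ((2 * Real.pi) ^ (-(n : ℝ) / 2) * Real.exp (-‖x‖ ^ 2 / 2))

open Real Set Function

theorem IsSigmaCompact.measurableSet {X : Type*} [TopologicalSpace X] [T2Space X]
    [MeasurableSpace X] [OpensMeasurableSpace X] {s : Set X} (hs : IsSigmaCompact s) :
    MeasurableSet s := by
  obtain ⟨K, hK, rfl⟩ := hs
  exact .iUnion fun n => (hK n).measurableSet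

theorem setIntegral_stdGaussian {n : ℕ} {F : Type*} [NormedAddCommGroup F] [NormedSpace ℝ F]
    (s : Set (EuclideanSpace ℝ (Fin n))) (f : EuclideanSpace ℝ (Fin n) → F) :
    ∫ x in s, f x ∂stdGaussian n
      = ∫ x in s, ((2 * π) ^ (-(n : ℝ) / 2) * exp (-‖x‖ ^ 2 / 2)) • f x := by
  rw [stdGaussian, setIntegral_withDensity_eq_setIntegral_toReal_smul' s (by fun_prop)
    (.of_forall fun _ => ENNReal.ofReal_lt_top)]
  congr! 3 with x
  exact ENNReal.toReal_ofReal (by positivity)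

theorem integral_Ioi_sq_mul_exp_neg_sq_div_two :
    ∫ r in Ioi (0 : ℝ), r ^ 2 * exp (-r ^ 2 / 2) = √(π / 2) := by
  have h := integral_rpow_mul_exp_neg_mul_rpow (p := 2) (q := 2) (b := 1 / 2)
    (by norm_num) (by norm_num) (by norm_num)
  have hΓ : Gamma (3 / 2) = √π / 2 := by
    rw [show (3 / 2 : ℝ) = 1 / 2 + 1 by norm_num, Gamma_add_one (by norm_num), Gamma_one_half_eq]
    ring
  have hpow : (1 / 2 : ℝ) ^ (-(3 / 2 : ℝ)) = 2 * √2 := by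
    rw [one_div, inv_rpow zero_le_two, rpow_neg zero_le_two, inv_inv,
      show (3 / 2 : ℝ) = 1 + 1 / 2 by norm_num, rpow_add two_pos, rpow_one, sqrt_eq_rpow]
  norm_num [hΓ, hpow] at h
  have hexp : ∀ r : ℝ, -r ^ 2 / 2 = -(1 / 2 * r ^ 2) := fun r => by ring
  simp_rw [hexp, h, sqrt_div' _ zero_le_two]
  field_simp
  rw [sq_sqrt zero_le_two]

local notation "ℝ²" => EuclideanSpace ℝ (Fin 2)

noncomputable def unitVec (φ : ℝ) : ℝ² := !₂[cos φ, sin φ]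

theorem norm_unitVec (φ : ℝ) : ‖unitVec φ‖ = 1 := by
  simp [unitVec, EuclideanSpace.norm_eq, Fin.sum_univ_two]

theorem continuous_unitVec : Continuous unitVec := by
  unfold unitVec
  fun_prop

theorem periodic_unitVec : Periodic unitVec (2 * π) := fun φ => by
  simp [unitVec]

theorem eq_smul_unitVec_iff {x : ℝ²} {r φ : ℝ} :
    x = r • unitVec φ ↔ x 0 = r * cos φ ∧ x 1 = r * sin φ := by
  simp [unitVec, PiLp.ext_iff, Fin.forall_fin_two]

theorem unitVec_eq_unitVec_iff {φ ψ : ℝ} : unitVec φ = unitVec ψ ↔ (φ : Real.Angle) = ψ := by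
  constructor
  · intro h
    have h0 := congrArg (· 0) h
    have h1 := congrArg (· 1) h
    simp only [unitVec] at h0 h1
    exact Real.Angle.cos_sin_inj (by simpa using h0) (by simpa using h1)
  · intro h
    have hcos := congrArg Real.Angle.cos h
    have hsin := congrArg Real.Angle.sin h
    simp only [Real.Angle.cos_coe, Real.Angle.sin_coe] at hcos hsin
    simp [unitVec, hcos, hsin]

theorem intervalIntegral_unitVec (a b : ℝ) :
    ∫ φ in a..b, unitVec φ = !₂[sin b - sin a, cos a - cos b] := by
  ext i
  have h := (EuclideanSpace.proj (𝕜 := ℝ) i).intervalIntegral_comp_comm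
    (continuous_unitVec.intervalIntegrable (μ := volume) a b)
  fin_cases i <;> simp [unitVec] at h ⊢ <;> rw [← h]

theorem norm_sq_intervalIntegral_unitVec (a b : ℝ) :
    ‖∫ φ in a..b, unitVec φ‖ ^ 2 = 4 * sin ((b - a) / 2) ^ 2 := by
  rw [intervalIntegral_unitVec, EuclideanSpace.norm_sq_eq, Fin.sum_univ_two]
  simp only [Matrix.cons_val_zero, Matrix.cons_val_one, Real.norm_eq_abs, sq_abs]
  have hhalf := cos_two_mul ((b - a) / 2)
  rw [show 2 * ((b - a) / 2) = b - a by ring] at hhalf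
  linear_combination sin_sq_add_cos_sq a + sin_sq_add_cos_sq b + 2 * cos_sub b a
    - 2 * hhalf - 4 * sin_sq_add_cos_sq ((b - a) / 2)

variable {E : Type*} [NormedAddCommGroup E] [NormedSpace ℝ E]

theorem integral_comp_smul_unitVec (f : ℝ² → E) :
    ∫ x, f x = ∫ p in polarCoord.target, p.1 • f (p.1 • unitVec p.2) := by
  let e : ℝ² ≃ᵐ ℝ × ℝ :=
    (MeasurableEquiv.toLp 2 (Fin 2 → ℝ)).symm.trans MeasurableEquiv.finTwoArrow
  have he : MeasurePreserving e :=
    (PiLp.volume_preserving_ofLp _).trans (volume_preserving_finTwoArrow ℝ)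
  rw [← he.symm.integral_comp' f, ← integral_comp_polarCoord_symm]
  congr! 3 with p
  congr 1
  ext i
  fin_cases i <;> simp [e, unitVec, polarCoord_symm_apply]

def arcAngles (θ α : ℝ) : Set ℝ := {φ | ∃ ψ ∈ Icc θ (θ + α), (ψ : Real.Angle) = φ}

theorem mem_arcAngles_iff {θ α φ : ℝ} (hφ : φ ∈ Ioo θ (θ + 2 * π)) :
    φ ∈ arcAngles θ α ↔ φ ∈ Ioc θ (θ + α) := by
  refine ⟨?_, fun h => ⟨φ, Ioc_subset_Icc_self h, rfl⟩⟩
  rintro ⟨ψ, hψ, h⟩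
  refine ⟨hφ.1, ?_⟩
  by_cases hψ' : ψ < θ + 2 * π
  · have : Fact (0 < 2 * π) := ⟨two_pi_pos⟩
    have := (AddCircle.coe_eq_coe_iff_of_mem_Ico (p := 2 * π) ⟨hψ.1, hψ'⟩
      (Ioo_subset_Ico_self hφ)).mp h
    linarith [hψ.2]
  · linarith [hφ.2, hψ.2]

theorem periodic_indicator_arcAngles {M : Type*} [Zero M] {g : ℝ → M} (hg : Periodic g (2 * π))
    (θ α : ℝ) : Periodic ((arcAngles θ α).indicator g) (2 * π) := by
  intro φ
  have hmem : φ + 2 * π ∈ arcAngles θ α ↔ φ ∈ arcAngles θ α := by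
    simp only [arcAngles, mem_ofPred_eq, Real.Angle.coe_add, Real.Angle.coe_two_pi, add_zero]
  by_cases h : φ ∈ arcAngles θ α
  · rw [indicator_of_mem (hmem.mpr h), indicator_of_mem h, hg]
  · rw [indicator_of_notMem (mt hmem.mp h), indicator_of_notMem h]

theorem setIntegral_Ioo_indicator_arcAngles {θ α : ℝ} (hα0 : 0 ≤ α) (hα2 : α ≤ 2 * π)
    {g : ℝ → E} (hg : Periodic g (2 * π)) :
    ∫ φ in Ioo (-π) π, (arcAngles θ α).indicator g φ = ∫ φ in θ..θ + α, g φ := by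
  have hπ := pi_pos
  calc ∫ φ in Ioo (-π) π, (arcAngles θ α).indicator g φ
      = ∫ φ in -π..-π + 2 * π, (arcAngles θ α).indicator g φ := by
        rw [show -π + 2 * π = π by ring, intervalIntegral.integral_of_le (by linarith),
          integral_Ioc_eq_integral_Ioo]
    _ = ∫ φ in θ..θ + 2 * π, (arcAngles θ α).indicator g φ :=
        (periodic_indicator_arcAngles hg θ α).intervalIntegral_add_eq _ _
    _ = ∫ φ in Ioo θ (θ + 2 * π), (Ioc θ (θ + α)).indicator g φ := by
        rw [intervalIntegral.integral_of_le (by linarith), integral_Ioc_eq_integral_Ioo]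
        exact setIntegral_congr_fun measurableSet_Ioo fun φ hφ =>
          indicator_eq_indicator (mem_arcAngles_iff hφ) rfl
    _ = ∫ φ in θ..θ + α, g φ := by
        rw [← integral_Ioc_eq_integral_Ioo, setIntegral_indicator measurableSet_Ioc, Ioc_inter_Ioc,
          max_self, min_eq_right (by linarith), intervalIntegral.integral_of_le (by linarith)]

noncomputable def planarCone (θ α : ℝ) : Set ℝ² :=
  (fun p : ℝ × ℝ => p.1 • unitVec p.2) '' (Ici 0 ×ˢ Icc θ (θ + α))

theorem mem_planarCone_iff {θ α : ℝ} {x : ℝ²} :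
    x ∈ planarCone θ α ↔
      ∃ r : ℝ, 0 ≤ r ∧ ∃ φ ∈ Icc θ (θ + α), x 0 = r * cos φ ∧ x 1 = r * sin φ := by
  constructor
  · rintro ⟨⟨r, φ⟩, ⟨hr, hφ⟩, rfl⟩
    exact ⟨r, hr, φ, hφ, eq_smul_unitVec_iff.mp rfl⟩
  · rintro ⟨r, hr, φ, hφ, h⟩
    exact ⟨(r, φ), ⟨hr, hφ⟩, (eq_smul_unitVec_iff.mpr h).symm⟩

theorem measurableSet_planarCone (θ α : ℝ) : MeasurableSet (planarCone θ α) := by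
  have : SigmaCompactSpace (Ici (0 : ℝ) ×ˢ Icc θ (θ + α)) :=
    (isClosed_Ici.prod isClosed_Icc).sigmaCompactSpace
  exact ((isSigmaCompact_iff_sigmaCompactSpace.mpr this).image
    (continuous_fst.smul (continuous_unitVec.comp continuous_snd))).measurableSet

theorem smul_unitVec_mem_planarCone_iff {θ α r φ : ℝ} (hr : 0 < r) :
    r • unitVec φ ∈ planarCone θ α ↔ φ ∈ arcAngles θ α := by
  constructor
  · rintro ⟨⟨s, ψ⟩, ⟨hs : 0 ≤ s, hψ⟩, h⟩
    have hsr : s = r := by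
      simpa [norm_smul, norm_unitVec, abs_of_nonneg hs, abs_of_pos hr] using congrArg norm h
    subst hsr
    exact ⟨ψ, hψ, unitVec_eq_unitVec_iff.mp (smul_right_injective _ hr.ne' h)⟩
  · rintro ⟨ψ, hψ, h⟩
    exact ⟨(r, ψ), ⟨hr.le, hψ⟩, by simp [unitVec_eq_unitVec_iff.mpr h]⟩

theorem setIntegral_planarCone {θ α : ℝ} (hα0 : 0 ≤ α) (hα2 : α ≤ 2 * π) {a : ℝ → ℝ}
    {g : ℝ → E} (hg : Periodic g (2 * π)) {f : ℝ² → E}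
    (hf : ∀ r > 0, ∀ φ, f (r • unitVec φ) = a r • g φ) :
    ∫ x in planarCone θ α, f x = (∫ r in Ioi 0, r * a r) • ∫ φ in θ..θ + α, g φ := by
  calc ∫ x in planarCone θ α, f x
      = ∫ x, (planarCone θ α).indicator f x :=
        (integral_indicator (measurableSet_planarCone θ α)).symm
    _ = ∫ p in Ioi 0 ×ˢ Ioo (-π) π, (p.1 * a p.1) • (arcAngles θ α).indicator g p.2 := by
        rw [integral_comp_smul_unitVec, polarCoord_target]
        refine setIntegral_congr_fun (measurableSet_Ioi.prod measurableSet_Ioo) ?_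
        rintro ⟨r, φ⟩ ⟨hr : 0 < r, -⟩
        dsimp only
        have hmem := smul_unitVec_mem_planarCone_iff (θ := θ) (α := α) (φ := φ) hr
        by_cases h : φ ∈ arcAngles θ α
        · rw [indicator_of_mem (hmem.mpr h), indicator_of_mem h, hf r hr, smul_smul]
        · rw [indicator_of_notMem (mt hmem.mp h), indicator_of_notMem h, smul_zero, smul_zero]
    _ = (∫ r in Ioi 0, r * a r) • ∫ φ in θ..θ + α, g φ := by
        rw [Measure.volume_eq_prod, ← Measure.prod_restrict,
          integral_prod_smul (fun r => r * a r) ((arcAngles θ α).indicator g),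
          setIntegral_Ioo_indicator_arcAngles hα0 hα2 hg]

/-- The Gaussian moment of a planar cone of angle `α` with vertex at the origin has squared
norm `sin²(α/2)/(2π)`. -/
theorem gaussian_moment_of_cone (α θ : ℝ) (hα : α ∈ Set.Icc (0 : ℝ) (2 * Real.pi))
    (A : Set (EuclideanSpace ℝ (Fin 2)))
    (hA : A = {x : EuclideanSpace ℝ (Fin 2) | ∃ r : ℝ, 0 ≤ r ∧
      ∃ φ ∈ Set.Icc θ (θ + α), x 0 = r * Real.cos φ ∧ x 1 = r * Real.sin φ}) :
    ‖∫ x in A, x ∂stdGaussian 2‖ ^ 2 = Real.sin (α / 2) ^ 2 / (2 * Real.pi) := by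
  have hcone : A = planarCone θ α := hA ▸ Set.ext fun x => mem_planarCone_iff.symm
  have hc : (2 * π) ^ (-((2 : ℕ) : ℝ) / 2) = (2 * π)⁻¹ := by norm_num [rpow_neg_one]
  have hpolar : ∀ r > 0, ∀ φ, ((2 * π)⁻¹ * exp (-‖r • unitVec φ‖ ^ 2 / 2)) • (r • unitVec φ)
      = ((2 * π)⁻¹ * (r * exp (-r ^ 2 / 2))) • unitVec φ := fun r hr φ => by
    rw [norm_smul, norm_unitVec, Real.norm_of_nonneg hr.le, smul_smul]
    ring_nf
  have hradial :
      ∫ r in Ioi 0, r * ((2 * π)⁻¹ * (r * exp (-r ^ 2 / 2))) = (2 * π)⁻¹ * √(π / 2) := by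
    rw [← integral_Ioi_sq_mul_exp_neg_sq_div_two, ← integral_const_mul]
    congr! 2 with r
    ring
  rw [hcone, setIntegral_stdGaussian, hc, setIntegral_planarCone hα.1 hα.2 periodic_unitVec hpolar,
    hradial, norm_smul, mul_pow, norm_sq_intervalIntegral_unitVec, add_sub_cancel_left,
    Real.norm_eq_abs, sq_abs, mul_pow, sq_sqrt (by positivity)]
  field_simp
  ring
end

section
/- For every c > 0, the maximum of sin²(α_1/2) + sin²(α_2/2) + c·sin²(α_3/2) over α_1, α_2, α_3 ∈ [0, 2π] with α_1 + α_2 + α_3 = 2π equals (2c+1)²/(4c) if c ≥ 1/2, and equals 2 if c ≤ 1/2. -/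
/-!
With `x = cos((α₁+α₂)/2)` and `t = cos((α₁-α₂)/2)` the constraint `α₃ = 2π - α₁ - α₂` turns the
objective into `1 - x t + c (1 - x²)`. Completing the square, `4c` times the gap to `(2c+1)²/(4c)`
is `(2cx + t)² + (1 - t²) ≥ 0`, with equality at `t = 1`, `x = -1/(2c)`, which requires
`c ≥ 1/2`; when `c ≤ 1/2`, twice the gap to `2` is `(x + t)² + (1 - t²) + (1 - 2c)(1 - x²) ≥ 0`,
with equality at `t = 1`, `x = -1`.
-/

open Real

lemma sin_sq_half_add_sin_sq_half (a b : ℝ) :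
    sin (a / 2) ^ 2 + sin (b / 2) ^ 2 = 1 - cos ((a + b) / 2) * cos ((a - b) / 2) := by
  have hsum := cos_add_cos a b
  rw [sin_sq_eq_half_sub, sin_sq_eq_half_sub, show 2 * (a / 2) = a by ring,
    show 2 * (b / 2) = b by ring]
  linarith

lemma sin_sq_three_angles_eq (c : ℝ) {a b d : ℝ} (h : a + b + d = 2 * π) :
    sin (a / 2) ^ 2 + sin (b / 2) ^ 2 + c * sin (d / 2) ^ 2 =
      1 - cos ((a + b) / 2) * cos ((a - b) / 2) + c * (1 - cos ((a + b) / 2) ^ 2) := by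
  have hd : d / 2 = π - (a + b) / 2 := by linarith
  rw [sin_sq_half_add_sin_sq_half, hd, sin_pi_sub, sin_sq]

lemma one_sub_mul_add_mul_one_sub_sq_le_sq_div {c : ℝ} (hc : 0 < c) (x : ℝ) {t : ℝ}
    (ht : |t| ≤ 1) :
    1 - x * t + c * (1 - x ^ 2) ≤ (2 * c + 1) ^ 2 / (4 * c) := by
  have ht2 : t ^ 2 ≤ 1 := (sq_le_one_iff_abs_le_one t).2 ht
  rw [le_div_iff₀ (by positivity)]
  nlinarith [sq_nonneg (2 * c * x + t)]

lemma one_sub_mul_add_mul_one_sub_sq_le_two {c : ℝ} (hc : c ≤ 1 / 2) {x t : ℝ} (hx : |x| ≤ 1)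
    (ht : |t| ≤ 1) :
    1 - x * t + c * (1 - x ^ 2) ≤ 2 := by
  have hx2 : x ^ 2 ≤ 1 := (sq_le_one_iff_abs_le_one x).2 hx
  have ht2 : t ^ 2 ≤ 1 := (sq_le_one_iff_abs_le_one t).2 ht
  nlinarith [sq_nonneg (x + t), mul_nonneg (sub_nonneg.2 hc) (sub_nonneg.2 hx2)]

/-- The maximum of `sin²(α₁/2) + sin²(α₂/2) + c sin²(α₃/2)` over angles in `[0, 2π]` summing
to `2π` equals `(2c+1)²/(4c)` if `c ≥ 1/2` and `2` if `c ≤ 1/2`. -/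
theorem max_sin_sq_three_angles (c : ℝ) (hc : 0 < c) :
    IsGreatest {r : ℝ | ∃ α₁ α₂ α₃ : ℝ,
        α₁ ∈ Set.Icc (0 : ℝ) (2 * Real.pi) ∧ α₂ ∈ Set.Icc (0 : ℝ) (2 * Real.pi) ∧
        α₃ ∈ Set.Icc (0 : ℝ) (2 * Real.pi) ∧ α₁ + α₂ + α₃ = 2 * Real.pi ∧
        r = Real.sin (α₁ / 2) ^ 2 + Real.sin (α₂ / 2) ^ 2 + c * Real.sin (α₃ / 2) ^ 2}
      (if 1 / 2 ≤ c then (2 * c + 1) ^ 2 / (4 * c) else 2) := by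
  have hπ := pi_pos
  refine ⟨?_, ?_⟩
  · split_ifs with h
    · have hcos : cos (arccos (-1 / (2 * c))) = -1 / (2 * c) := by
        have hinv : 1 / (2 * c) ≤ 1 := by rw [div_le_one₀ (by positivity)]; linarith
        have hinv' : 0 ≤ 1 / (2 * c) := by positivity
        exact cos_arccos (by rw [neg_div]; linarith) (by rw [neg_div]; linarith)
      set A := arccos (-1 / (2 * c))
      have hA₀ : 0 ≤ A := arccos_nonneg _
      have hA : A ≤ π := arccos_le_pi _
      refine ⟨A, A, 2 * π - 2 * A, ⟨hA₀, by linarith⟩, ⟨hA₀, by linarith⟩,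
        ⟨by linarith, by linarith⟩, by ring, ?_⟩
      rw [sin_sq_three_angles_eq c (by ring), add_self_div_two, sub_self, zero_div, cos_zero, hcos]
      field_simp
      ring
    · refine ⟨π, π, 0, ⟨hπ.le, by linarith⟩, ⟨hπ.le, by linarith⟩, ⟨le_rfl, by linarith⟩,
        by ring, ?_⟩
      rw [sin_sq_three_angles_eq c (by ring), add_self_div_two, sub_self, zero_div, cos_zero,
        cos_pi]
      ring
  · rintro r ⟨a, b, d, -, -, -, hsum, rfl⟩
    rw [sin_sq_three_angles_eq c hsum]
    split_ifs with h
    · exact one_sub_mul_add_mul_one_sub_sq_le_sq_div hc _ (abs_cos_le_one _)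
    · exact one_sub_mul_add_mul_one_sub_sq_le_two (not_le.1 h).le (abs_cos_le_one _)
        (abs_cos_le_one _)
end

section
/- Let B be a k×k symmetric positive semidefinite matrix with b_{ij} = ⟨v_i, v_j⟩, and define C(B) = C(k−1, B) (the maximal value of Σ_{i,j} b_{ij} ⟨z_i, z_j⟩ over measurable partitions {A_1,…,A_k} of ℝ^{k−1}, where z_i = ∫_{A_i} x dγ_{k−1}(x)). Let R(B) be the radius of the smallest Euclidean ball containing {v_1,…,v_k}. Then C(B) ≤ R(B)². -/
open MeasureTheory RealInnerProductSpace

/-!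
Since `∑ i, z i = ∫ x ∂γ = 0`, the form `∑ i j, ⟪v i, v j⟫ ⟪z i, z j⟫` does not change when every
`v i` is replaced by `v i - w`. Expanding the centred vectors in an orthonormal basis reduces the
bound to the scalar inequality `‖∑ i, c i • z i‖² ≤ ∑ i, c i ^ 2 γ (A i)`. This is Bessel's
inequality for the projection, in `L²(γ)`, of the step function `∑ i, c i 𝟙_{A i}` onto the linear
functions `x ↦ ⟪ζ, x⟫`, which form an isometric copy of `ℝ^{k-1}` because `γ` has identity
covariance. Hence the form is at most `∑ i, ‖v i - w‖² γ (A i) ≤ R²`.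
-/

section Gaussian

instance isFiniteMeasure_stdGaussian (n : ℕ) : IsFiniteMeasure (stdGaussian n) := by
  refine isFiniteMeasure_withDensity_ofReal (Integrable.hasFiniteIntegral ?_)
  refine Integrable.const_mul ?_ _
  have h := GaussianFourier.integral_rexp_neg_mul_sq_norm
    (V := EuclideanSpace ℝ (Fin n)) (b := 1 / 2) (by norm_num)
  refine (Integrable.of_integral_ne_zero (h.trans_ne (by positivity))).congr ?_
  exact Filter.Eventually.of_forall fun x => by ring_nf

open Complex in
lemma charFun_stdGaussian (n : ℕ) (t : EuclideanSpace ℝ (Fin n)) :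
    charFun (stdGaussian n) t = cexp (-‖t‖ ^ 2 / 2) := by
  have hdens : Measurable fun x : EuclideanSpace ℝ (Fin n) =>
      ENNReal.ofReal ((2 * Real.pi) ^ (-(n : ℝ) / 2) * Real.exp (-‖x‖ ^ 2 / 2)) := by fun_prop
  rw [charFun_apply, stdGaussian, integral_withDensity_eq_integral_toReal_smul hdens
    (Filter.Eventually.of_forall fun _ => ENNReal.ofReal_lt_top)]
  have hintegrand : ∀ x : EuclideanSpace ℝ (Fin n),
      (ENNReal.ofReal ((2 * Real.pi) ^ (-(n : ℝ) / 2) * Real.exp (-‖x‖ ^ 2 / 2))).toReal •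
        cexp (⟪x, t⟫ * I) =
      ((2 * Real.pi) ^ (-(n : ℝ) / 2) : ℝ) * cexp (-(1 / 2) * ‖x‖ ^ 2 + I * ⟪t, x⟫) := by
    intro x
    rw [ENNReal.toReal_ofReal (by positivity), Complex.real_smul, ofReal_mul, mul_assoc,
      ofReal_exp, ← Complex.exp_add, real_inner_comm]
    congr 2
    push_cast
    ring
  have hfourier := GaussianFourier.integral_cexp_neg_mul_sq_norm_add
    (V := EuclideanSpace ℝ (Fin n)) (b := 1 / 2) (by norm_num) I t
  rw [finrank_euclideanSpace_fin] at hfourier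
  simp_rw [hintegrand]
  rw [integral_const_mul, hfourier, ← mul_assoc,
    show (Real.pi : ℂ) / (1 / 2) = ((2 * Real.pi : ℝ) : ℂ) by push_cast; ring,
    ofReal_cpow (by positivity), ← cpow_add _ _ (by exact_mod_cast Real.two_pi_pos.ne')]
  push_cast
  rw [show -(n : ℂ) / 2 + n / 2 = 0 by ring, cpow_zero, one_mul, I_sq]
  congr 1
  ring

lemma stdGaussian_eq_probabilityTheory_stdGaussian (n : ℕ) :
    stdGaussian n = ProbabilityTheory.stdGaussian (EuclideanSpace ℝ (Fin n)) :=
  Measure.ext_of_charFun <| funext fun t => by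
    rw [charFun_stdGaussian, ProbabilityTheory.charFun_stdGaussian]

lemma integral_inner_sq_stdGaussian {E : Type*} [NormedAddCommGroup E] [InnerProductSpace ℝ E]
    [FiniteDimensional ℝ E] [MeasurableSpace E] [BorelSpace E] (ζ : E) :
    ∫ x, ⟪ζ, x⟫ ^ 2 ∂ProbabilityTheory.stdGaussian E = ‖ζ‖ ^ 2 := by
  have h := ProbabilityTheory.covarianceBilin_apply
    (ProbabilityTheory.IsGaussian.memLp_two_id (μ := ProbabilityTheory.stdGaussian E)) ζ ζ
  rw [ProbabilityTheory.covarianceBilin_stdGaussian, innerSL_apply_apply ℝ,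
    real_inner_self_eq_norm_sq] at h
  simp only [id_eq, ProbabilityTheory.integral_id_stdGaussian, sub_zero, ← sq] at h
  exact h.symm

end Gaussian

section Partition

variable {α : Type*} [MeasurableSpace α] {μ : Measure α} {ι : Type*} [Fintype ι] {A : ι → Set α}

lemma sum_setIntegral_of_iUnion_eq_univ {G : Type*} [NormedAddCommGroup G] [NormedSpace ℝ G]
    (hA : ∀ i, MeasurableSet (A i)) (hdisj : Pairwise fun i j => Disjoint (A i) (A j))
    (hcover : ⋃ i, A i = Set.univ) {g : α → G} (hg : Integrable g μ) :
    ∑ i, ∫ x in A i, g x ∂μ = ∫ x, g x ∂μ := by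
  rw [← integral_iUnion_fintype hA hdisj fun i => hg.integrableOn, hcover, setIntegral_univ]

lemma sum_setIntegral_le_integral {g : α → ℝ} (hA : ∀ i, MeasurableSet (A i))
    (hdisj : Pairwise fun i j => Disjoint (A i) (A j)) (hg : Integrable g μ) (hg₀ : 0 ≤ g) :
    ∑ i, ∫ x in A i, g x ∂μ ≤ ∫ x, g x ∂μ := by
  rw [← integral_iUnion_fintype hA hdisj fun i => hg.integrableOn]
  exact setIntegral_le_integral hg (Filter.Eventually.of_forall hg₀)

lemma sum_measureReal_of_iUnion_eq_univ [IsProbabilityMeasure μ] (hA : ∀ i, MeasurableSet (A i))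
    (hdisj : Pairwise fun i j => Disjoint (A i) (A j)) (hcover : ⋃ i, A i = Set.univ) :
    ∑ i, μ.real (A i) = 1 := by
  rw [← measureReal_iUnion_fintype hdisj hA, hcover, probReal_univ]

end Partition

section Gram

variable {ι : Type*} [Fintype ι] {E F : Type*} [NormedAddCommGroup E] [InnerProductSpace ℝ E]
  [NormedAddCommGroup F] [InnerProductSpace ℝ F]

lemma norm_sum_smul_sq (c : ι → ℝ) (z : ι → E) :
    ‖∑ i, c i • z i‖ ^ 2 = ∑ i, ∑ j, c i * c j * ⟪z i, z j⟫ := by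
  simp only [← real_inner_self_eq_norm_sq, sum_inner, inner_sum, real_inner_smul_left,
    real_inner_smul_right, mul_assoc]
  rw [Finset.sum_comm]
  exact Finset.sum_congr rfl fun i _ => Finset.sum_congr rfl fun j _ => mul_left_comm _ _ _

lemma sum_inner_sub_mul_inner_of_sum_eq_zero (v : ι → F) (w : F) {z : ι → E}
    (hz : ∑ i, z i = 0) :
    ∑ i, ∑ j, ⟪v i - w, v j - w⟫ * ⟪z i, z j⟫ = ∑ i, ∑ j, ⟪v i, v j⟫ * ⟪z i, z j⟫ := by
  have hrow : ∀ i, ∑ j, ⟪z i, z j⟫ = 0 := fun i => by rw [← inner_sum, hz, inner_zero_right]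
  have hcol : ∀ j, ∑ i, ⟪z i, z j⟫ = 0 := fun j => by rw [← sum_inner, hz, inner_zero_left]
  simp only [inner_sub_left, inner_sub_right, sub_mul, Finset.sum_sub_distrib, ← Finset.mul_sum,
    hrow, mul_zero, sub_zero]
  rw [Finset.sum_comm (f := fun i j => ⟪w, v j⟫ * ⟪z i, z j⟫)]
  simp only [← Finset.mul_sum, hcol, mul_zero, Finset.sum_const_zero, sub_zero]

end Gram

section Bessel

variable {E : Type*} [NormedAddCommGroup E] [InnerProductSpace ℝ E] [CompleteSpace E]
  [MeasurableSpace E] {μ : Measure E} [IsFiniteMeasure μ] {ι : Type*} [Fintype ι] {A : ι → Set E}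

lemma setIntegral_sub_inner_sq (hμ : MemLp id 2 μ) (s : Set E) (c : ℝ) (ζ : E) :
    ∫ x in s, (c - ⟪ζ, x⟫) ^ 2 ∂μ =
      c ^ 2 * μ.real s - 2 * c * ⟪ζ, ∫ x in s, x ∂μ⟫ + ∫ x in s, ⟪ζ, x⟫ ^ 2 ∂μ := by
  have hid : Integrable (fun x : E => x) μ := hμ.integrable one_le_two
  have hsq : Integrable (fun x => ⟪ζ, x⟫ ^ 2) μ := (hμ.const_inner ζ).integrable_sq
  have hlin : IntegrableOn (fun x => 2 * c * ⟪ζ, x⟫) s μ :=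
    (hid.const_inner ζ).integrableOn.const_mul _
  have hquad : IntegrableOn (fun x => c ^ 2 - 2 * c * ⟪ζ, x⟫) s μ :=
    (integrable_const (c ^ 2)).integrableOn.sub hlin
  have hexpand : ∀ x : E, (c - ⟪ζ, x⟫) ^ 2 = (c ^ 2 - 2 * c * ⟪ζ, x⟫) + ⟪ζ, x⟫ ^ 2 :=
    fun x => by ring
  simp_rw [hexpand]
  rw [integral_add hquad hsq.integrableOn, integral_sub (integrable_const _).integrableOn hlin,
    setIntegral_const, integral_const_mul, integral_inner hid.integrableOn, smul_eq_mul,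
    mul_comm (μ.real s)]

lemma norm_sum_smul_setIntegral_sq_le (hμ : MemLp id 2 μ)
    (hvar : ∀ ζ : E, ∫ x, ⟪ζ, x⟫ ^ 2 ∂μ ≤ ‖ζ‖ ^ 2) (hA : ∀ i, MeasurableSet (A i))
    (hdisj : Pairwise fun i j => Disjoint (A i) (A j)) (c : ι → ℝ) :
    ‖∑ i, c i • ∫ x in A i, x ∂μ‖ ^ 2 ≤ ∑ i, c i ^ 2 * μ.real (A i) := by
  obtain ⟨ζ, hζ⟩ : ∃ ζ, ζ = ∑ i, c i • ∫ x in A i, x ∂μ := ⟨_, rfl⟩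
  rw [← hζ]
  have hnorm : ‖ζ‖ ^ 2 = ∑ i, c i * ⟪ζ, ∫ x in A i, x ∂μ⟫ := by
    rw [← real_inner_self_eq_norm_sq]
    nth_rw 2 [hζ]
    simp only [inner_sum, real_inner_smul_right]
  have hproj : ∑ i, ∫ x in A i, ⟪ζ, x⟫ ^ 2 ∂μ ≤ ‖ζ‖ ^ 2 :=
    (sum_setIntegral_le_integral hA hdisj (hμ.const_inner ζ).integrable_sq
      fun x => sq_nonneg _).trans (hvar ζ)
  have hnonneg : 0 ≤ ∑ i, ∫ x in A i, (c i - ⟪ζ, x⟫) ^ 2 ∂μ :=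
    Finset.sum_nonneg fun i _ => integral_nonneg fun x => sq_nonneg _
  simp only [setIntegral_sub_inner_sq hμ, Finset.sum_add_distrib, Finset.sum_sub_distrib]
    at hnonneg
  have hcross : ∑ i, 2 * c i * ⟪ζ, ∫ x in A i, x ∂μ⟫ = 2 * ‖ζ‖ ^ 2 := by
    rw [hnorm, Finset.mul_sum]
    simp only [mul_assoc]
  linarith

lemma sum_inner_mul_inner_setIntegral_le {F : Type*} [NormedAddCommGroup F]
    [InnerProductSpace ℝ F] [FiniteDimensional ℝ F] (hμ : MemLp id 2 μ)
    (hvar : ∀ ζ : E, ∫ x, ⟪ζ, x⟫ ^ 2 ∂μ ≤ ‖ζ‖ ^ 2) (hA : ∀ i, MeasurableSet (A i))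
    (hdisj : Pairwise fun i j => Disjoint (A i) (A j)) (u : ι → F) :
    ∑ i, ∑ j, ⟪u i, u j⟫ * ⟪∫ x in A i, x ∂μ, ∫ x in A j, x ∂μ⟫ ≤
      ∑ i, ‖u i‖ ^ 2 * μ.real (A i) := by
  let e := stdOrthonormalBasis ℝ F
  have hparseval : ∀ i j, ⟪u i, u j⟫ = ∑ m, ⟪e m, u i⟫ * ⟪e m, u j⟫ := fun i j => by
    simp only [← e.sum_inner_mul_inner (u i) (u j), real_inner_comm (u i)]
  calc ∑ i, ∑ j, ⟪u i, u j⟫ * ⟪∫ x in A i, x ∂μ, ∫ x in A j, x ∂μ⟫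
      = ∑ m, ‖∑ i, ⟪e m, u i⟫ • ∫ x in A i, x ∂μ‖ ^ 2 := by
        simp only [norm_sum_smul_sq, hparseval, Finset.sum_mul]
        conv_rhs => rw [Finset.sum_comm]
        exact Finset.sum_congr rfl fun i _ => Finset.sum_comm
    _ ≤ ∑ m, ∑ i, ⟪e m, u i⟫ ^ 2 * μ.real (A i) :=
        Finset.sum_le_sum fun m _ => norm_sum_smul_setIntegral_sq_le hμ hvar hA hdisj _
    _ = ∑ i, ‖u i‖ ^ 2 * μ.real (A i) := by
        rw [Finset.sum_comm]
        simp only [← Finset.sum_mul, e.sum_sq_inner_right]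

end Bessel

theorem cB_le_rB_sq_general (k : ℕ)
    (v : Fin k → EuclideanSpace ℝ (Fin k)) (b : Fin k → Fin k → ℝ)
    (hb : ∀ i j, b i j = ⟪v i, v j⟫)
    (w : EuclideanSpace ℝ (Fin k)) (R : ℝ) (hR : ∀ i, ‖v i - w‖ ≤ R)
    (A : Fin k → Set (EuclideanSpace ℝ (Fin (k - 1)))) (hmeas : ∀ i, MeasurableSet (A i))
    (hdisj : Pairwise fun i j => Disjoint (A i) (A j)) (hcover : (⋃ i, A i) = Set.univ) :
    ∑ i, ∑ j, b i j *
        ⟪∫ x in A i, x ∂stdGaussian (k - 1), ∫ x in A j, x ∂stdGaussian (k - 1)⟫ ≤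
      R ^ 2 := by
  rw [stdGaussian_eq_probabilityTheory_stdGaussian]
  set γ := ProbabilityTheory.stdGaussian (EuclideanSpace ℝ (Fin (k - 1)))
  have hγ : MemLp id 2 γ := ProbabilityTheory.IsGaussian.memLp_two_id
  have hmean : ∑ i, ∫ x in A i, x ∂γ = 0 := by
    rw [sum_setIntegral_of_iUnion_eq_univ hmeas hdisj hcover (g := fun x => x)
      (hγ.integrable one_le_two)]
    exact ProbabilityTheory.integral_id_stdGaussian
  calc ∑ i, ∑ j, b i j * ⟪∫ x in A i, x ∂γ, ∫ x in A j, x ∂γ⟫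
      = ∑ i, ∑ j, ⟪v i - w, v j - w⟫ * ⟪∫ x in A i, x ∂γ, ∫ x in A j, x ∂γ⟫ := by
        simp only [hb]
        exact (sum_inner_sub_mul_inner_of_sum_eq_zero v w hmean).symm
    _ ≤ ∑ i, ‖v i - w‖ ^ 2 * γ.real (A i) :=
        sum_inner_mul_inner_setIntegral_le hγ (fun ζ => (integral_inner_sq_stdGaussian ζ).le)
          hmeas hdisj _
    _ ≤ ∑ i, R ^ 2 * γ.real (A i) := by
        gcongr with i
        exact hR i
    _ = R ^ 2 := by
        rw [← Finset.mul_sum, sum_measureReal_of_iUnion_eq_univ hmeas hdisj hcover, mul_one]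

/-- `C(B) ≤ R(B)²`: the value of the Gaussian-moment quadratic form of `B` on every measurable
partition of `ℝ^{k−1}` is at most the squared radius of the minimal enclosing ball of the
Gram vectors of `B`, hence the maximum `C(B)` is at most `R(B)²`. -/
theorem cB_le_rB_sq (k : ℕ)
    (v : Fin k → EuclideanSpace ℝ (Fin k)) (b : Fin k → Fin k → ℝ)
    (hb : ∀ i j, b i j = ⟪v i, v j⟫)
    (w : EuclideanSpace ℝ (Fin k)) (R : ℝ) (hR : ∀ i, ‖v i - w‖ ≤ R)
    (hmin : ∀ (w' : EuclideanSpace ℝ (Fin k)) (R' : ℝ), (∀ i, ‖v i - w'‖ ≤ R') → R ≤ R')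
    (A : Fin k → Set (EuclideanSpace ℝ (Fin (k - 1)))) (hmeas : ∀ i, MeasurableSet (A i))
    (hdisj : Pairwise fun i j => Disjoint (A i) (A j)) (hcover : (⋃ i, A i) = Set.univ) :
    ∑ i, ∑ j, b i j *
        ⟪∫ x in A i, x ∂stdGaussian (k - 1), ∫ x in A j, x ∂stdGaussian (k - 1)⟫ ≤
      R ^ 2 :=
  cB_le_rB_sq_general k v b hb w R hR A hmeas hdisj hcover
end

section
/- Let A be an n×n symmetric positive semidefinite matrix which is centered (Σ_{i,j} a_{ij} = 0), let v_1,…,v_k ∈ ℝ^k with Gram matrix B, let R(B) and w(B) be the radius and center of the minimal enclosing ball of {v_1,…,v_k}, and define SDP(A|B) = max over x_1,…,x_n ∈ S^{n−1} of Σ_{i,j} a_{ij}⟨x_i,x_j⟩ and Clust(A|B) = max over σ:{1,…,n}→{1,…,k} of Σ_{i,j} a_{ij} b_{σ(i)σ(j)}. Then SDP(A|B) ≥ Clust(A|B)/R(B)². -/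
/-!
A positive semidefinite `A` with zero total sum has zero row sums (`𝟙ᵀ A 𝟙 = 0` forces
`A 𝟙 = 0`), so `∑ aᵢⱼ ⟪yᵢ, yⱼ⟫` is unchanged when all `yᵢ` are translated by the same vector.
Hence `yᵢ = (v_{σ i} - w) / R` lie in the unit ball and have value `Clust / R²`. Lifting them to
the unit vectors `(yᵢ, sᵢ)` with `sᵢ = √(1 - ‖yᵢ‖²)` adds `sᵀ A s ≥ 0`, and the lifted vectors are
realised in `ℝⁿ` by factoring their positive semidefinite Gram matrix as `Dᴴ D`.
-/

open RealInnerProductSpace Matrix Finset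
open scoped ComplexOrder

theorem Matrix.PosSemidef.exists_gram_eq {𝕜 ι : Type*} [RCLike 𝕜] [Fintype ι]
    {X : Matrix ι ι 𝕜} (hX : X.PosSemidef) :
    ∃ x : ι → EuclideanSpace 𝕜 ι, gram 𝕜 x = X := by
  classical
  obtain ⟨D, rfl⟩ : ∃ D, X = Dᴴ * D := by
    open scoped MatrixOrder in exact CStarAlgebra.nonneg_iff_eq_star_mul_self.mp hX.nonneg
  refine ⟨fun i => WithLp.toLp 2 (Dᵀ i), Matrix.ext fun i j => ?_⟩
  simp [gram_apply, EuclideanSpace.inner_toLp_toLp, mul_apply, dotProduct, mul_comm]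

theorem Matrix.PosSemidef.sum_apply_eq_zero {𝕜 ι : Type*} [RCLike 𝕜] [Fintype ι]
    {A : Matrix ι ι 𝕜} (hA : A.PosSemidef) (hcent : ∑ i, ∑ j, A i j = 0) (i : ι) :
    ∑ j, A i j = 0 := by
  have hone : A *ᵥ (fun _ => 1) = 0 :=
    (hA.dotProduct_mulVec_zero_iff _).mp (by simpa [dotProduct, mulVec] using hcent)
  simpa [mulVec, dotProduct] using congrFun hone i

section

variable {ι E : Type*} [Fintype ι] [NormedAddCommGroup E] [InnerProductSpace ℝ E]

theorem sum_mul_inner_sub_const {A : Matrix ι ι ℝ} (hA : A.PosSemidef)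
    (hcent : ∑ i, ∑ j, A i j = 0) (y : ι → E) (w : E) :
    ∑ i, ∑ j, A i j * ⟪y i - w, y j - w⟫ = ∑ i, ∑ j, A i j * ⟪y i, y j⟫ := by
  have hrow := hA.sum_apply_eq_zero hcent
  have hcol (j : ι) : ∑ i, A i j = 0 := by
    rw [← hrow j]
    exact sum_congr rfl fun i _ => by simpa using hA.1.apply j i
  have expand (i j : ι) : A i j * ⟪y i - w, y j - w⟫
      = A i j * ⟪y i, y j⟫ - A i j * ⟪y i, w⟫ - A i j * ⟪w, y j⟫ + A i j * ⟪w, w⟫ := by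
    simp only [inner_sub_left, inner_sub_right]; ring
  simp only [expand, sum_add_distrib, sum_sub_distrib, ← sum_mul, ← mul_sum, hrow]
  rw [sum_comm (f := fun i j => A i j * ⟪w, y j⟫)]
  simp [← sum_mul, hcol]

theorem sum_mul_inner_smul {A : Matrix ι ι ℝ} (c : ℝ) (y : ι → E) :
    ∑ i, ∑ j, A i j * ⟪c • y i, c • y j⟫ = c ^ 2 * ∑ i, ∑ j, A i j * ⟪y i, y j⟫ := by
  simp only [real_inner_smul_left, real_inner_smul_right, mul_sum]
  exact sum_congr rfl fun i _ => sum_congr rfl fun j _ => by ring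

theorem exists_norm_eq_one_sum_mul_inner_le {A : Matrix ι ι ℝ} (hA : A.PosSemidef)
    (y : ι → E) (hy : ∀ i, ‖y i‖ ≤ 1) :
    ∃ x : ι → EuclideanSpace ℝ ι, (∀ i, ‖x i‖ = 1) ∧
      ∑ i, ∑ j, A i j * ⟪y i, y j⟫ ≤ ∑ i, ∑ j, A i j * ⟪x i, x j⟫ := by
  set s : ι → ℝ := fun i => √(1 - ‖y i‖ ^ 2)
  have hs (i : ι) : s i ^ 2 = 1 - ‖y i‖ ^ 2 :=
    Real.sq_sqrt (by nlinarith [hy i, norm_nonneg (y i)])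
  have hX : (gram ℝ y + vecMulVec s s).PosSemidef := by
    simpa using (posSemidef_gram ℝ y).add (posSemidef_vecMulVec_self_star s)
  obtain ⟨x, hx⟩ := hX.exists_gram_eq
  have hxx (i j : ι) : ⟪x i, x j⟫ = ⟪y i, y j⟫ + s i * s j := by
    simpa [gram_apply, vecMulVec_apply] using congrFun (congrFun hx i) j
  refine ⟨x, fun i => ?_, ?_⟩
  · have : ‖x i‖ ^ 2 = 1 := by
      rw [← real_inner_self_eq_norm_sq, hxx, real_inner_self_eq_norm_sq, ← sq, hs]; ring
    exact (pow_eq_one_iff_of_nonneg (norm_nonneg _) two_ne_zero).mp this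
  · have hs_nonneg : 0 ≤ ∑ i, ∑ j, A i j * (s i * s j) := by
      have hquad : ∑ i, ∑ j, A i j * (s i * s j) = star s ⬝ᵥ A *ᵥ s := by
        simp only [star_trivial, dotProduct, mulVec, mul_sum]
        exact sum_congr rfl fun i _ => sum_congr rfl fun j _ => by ring
      exact hquad ▸ hA.dotProduct_mulVec_nonneg s
    simpa [hxx, mul_add, sum_add_distrib] using hs_nonneg

theorem norm_inv_smul_le_one {u : E} {R : ℝ} (h : ‖u‖ ≤ R) : ‖R⁻¹ • u‖ ≤ 1 := by
  rw [norm_smul, norm_inv, Real.norm_of_nonneg ((norm_nonneg u).trans h)]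
  exact inv_mul_le_one_of_le₀ h ((norm_nonneg u).trans h)

end

theorem sdp_ge_clust_div_rsq_general (n k : ℕ)
    (A : Matrix (Fin n) (Fin n) ℝ) (hA : A.PosSemidef)
    (hcent : ∑ i, ∑ j, A i j = 0)
    (v : Fin k → EuclideanSpace ℝ (Fin k)) (b : Fin k → Fin k → ℝ)
    (hb : ∀ i j, b i j = ⟪v i, v j⟫)
    (w : EuclideanSpace ℝ (Fin k)) (R : ℝ) (hR : ∀ i, ‖v i - w‖ ≤ R)
    (σ : Fin n → Fin k) :
    ∃ x : Fin n → EuclideanSpace ℝ (Fin n), (∀ i, ‖x i‖ = 1) ∧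
      (∑ i, ∑ j, A i j * b (σ i) (σ j)) / R ^ 2 ≤ ∑ i, ∑ j, A i j * ⟪x i, x j⟫ := by
  obtain ⟨x, hx, hle⟩ := exists_norm_eq_one_sum_mul_inner_le hA
    (fun i => R⁻¹ • (v (σ i) - w)) fun i => norm_inv_smul_le_one (hR (σ i))
  -- for `R = 0` this also holds, as `R⁻¹ = 0` and both sides vanish
  refine ⟨x, hx, le_of_eq_of_le ?_ hle⟩
  rw [sum_mul_inner_smul, sum_mul_inner_sub_const hA hcent (fun i => v (σ i)), inv_pow,
    inv_mul_eq_div]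
  simp only [hb]

/-- `SDP(A|B) ≥ Clust(A|B)/R(B)²`: for every clustering `σ` there are unit vectors whose SDP
value is at least the clustering value divided by `R(B)²`. -/
theorem sdp_ge_clust_div_rsq (n k : ℕ)
    (A : Matrix (Fin n) (Fin n) ℝ) (hA : A.PosSemidef)
    (hcent : ∑ i, ∑ j, A i j = 0)
    (v : Fin k → EuclideanSpace ℝ (Fin k)) (b : Fin k → Fin k → ℝ)
    (hb : ∀ i j, b i j = ⟪v i, v j⟫)
    (w : EuclideanSpace ℝ (Fin k)) (R : ℝ) (hR : ∀ i, ‖v i - w‖ ≤ R)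
    (hmin : ∀ (w' : EuclideanSpace ℝ (Fin k)) (R' : ℝ), (∀ i, ‖v i - w'‖ ≤ R') → R ≤ R')
    (σ : Fin n → Fin k) :
    ∃ x : Fin n → EuclideanSpace ℝ (Fin n), (∀ i, ‖x i‖ = 1) ∧
      (∑ i, ∑ j, A i j * b (σ i) (σ j)) / R ^ 2 ≤ ∑ i, ∑ j, A i j * ⟪x i, x j⟫ :=
  sdp_ge_clust_div_rsq_general n k A hA hcent v b hb w R hR σ
end
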